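/- arXiv:1707.05158 — 4 statements merged into one kernel-verified Lean document; each statement's English description precedes it below -/
import Mathlib

section
/- Let n ≥ 2, let i ≠ j be indices in {1,…,n}, and let u = Σ_{σ ∈ Sₙ} c_σ · e_{σ(1)} ⊗ ⋯ ⊗ e_{σ(n)} ∈ (ℂⁿ)^{⊗n}, where c : Sₙ → ℂ. If (R_{ij}(θ))^{⊗n} u = u for every θ ∈ ℝ, where R_{ij}(θ) is the n×n matrix equal to the identity except for entries (i,i) = cos θ, (i,j) = sin θ, (j,i) = −sin θ, (j,j) = cos θ, then the coefficients are antisymmetric under exchanging the values i and j: for every σ ∈ Sₙ, c_{(i j)∘σ} = −c_σ, where (i j) denotes the transposition of i and j. -/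
/-!
At `θ = π/2` the rotation `R_{ij}` is the signed permutation matrix sending `e_m` to `e_{(i j) m}`,
with sign `-1` exactly for `m = i`. Since `σ` hits `i` exactly once, `R_{ij}(π/2)^{⊗n}` sends
`e_{σ(1)} ⊗ ⋯ ⊗ e_{σ(n)}` to `-e_{(i j)σ(1)} ⊗ ⋯ ⊗ e_{(i j)σ(n)}`, so invariance of `u` together
with linear independence of these pure tensors gives `c_σ = -c_{(i j)∘σ}`.
-/

open scoped TensorProduct

open PiTensorProduct

/-- The `n×n` rotation matrix `R_{ij}(θ)`: the identity except in rows/columns `i,j`,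
where it rotates by `θ`. -/
noncomputable def Rot (n : ℕ) (i j : Fin n) (θ : ℂ) : Matrix (Fin n) (Fin n) ℂ :=
  Matrix.of fun k l =>
    if k = i ∧ l = i then Complex.cos θ
    else if k = i ∧ l = j then Complex.sin θ
    else if k = j ∧ l = i then -Complex.sin θ
    else if k = j ∧ l = j then Complex.cos θ
    else if k = l then 1 else 0

section PiTensorProduct

variable {R ι κ : Type*} [CommSemiring R] [Fintype ι] [DecidableEq κ]

theorem linearIndependent_tprod_single [Finite κ] :
    LinearIndependent R fun p : ι → κ => tprod R fun k => (Pi.single (p k) 1 : κ → R) := by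
  convert (Basis.piTensorProduct fun _ : ι => Pi.basisFun R κ).linearIndependent with p
  simp

theorem map_tprod_single_of_apply_single {f : (κ → R) →ₗ[R] (κ → R)} {π : κ → κ} {ε : κ → R}
    (hf : ∀ m, f (Pi.single m 1) = ε m • Pi.single (π m) 1) (p : ι → κ) :
    map (fun _ => f) (tprod R fun k => (Pi.single (p k) 1 : κ → R)) =
      (∏ k, ε (p k)) • tprod R fun k => (Pi.single (π (p k)) 1 : κ → R) := by
  simp only [map_tprod, hf, MultilinearMap.map_smul_univ]

end PiTensorProduct

theorem Equiv.Perm.prod_ite_apply_eq {M α : Type*} [CommMonoid M] [Fintype α] [DecidableEq α]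
    (τ : Equiv.Perm α) (i : α) (a : M) : (∏ k, if τ k = i then a else 1) = a := by
  rw [Equiv.prod_comp τ fun m => if m = i then a else 1, Finset.prod_ite_eq' Finset.univ i]
  simp

theorem toLin'_Rot_pi_div_two_single {n : ℕ} {i j : Fin n} (hij : i ≠ j) (m : Fin n) :
    Matrix.toLin' (Rot n i j (Real.pi / 2 : ℝ)) (Pi.single m 1) =
      (if m = i then -1 else 1 : ℂ) • Pi.single (Equiv.swap i j m) 1 := by
  have hcos : Complex.cos (Real.pi / 2 : ℝ) = 0 := by
    rw [← Complex.ofReal_cos, Real.cos_pi_div_two, Complex.ofReal_zero]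
  have hsin : Complex.sin (Real.pi / 2 : ℝ) = 1 := by
    rw [← Complex.ofReal_sin, Real.sin_pi_div_two, Complex.ofReal_one]
  ext k
  rw [Matrix.toLin'_apply, Matrix.mulVec_single_one]
  simp only [Rot, Matrix.col_apply, Matrix.of_apply, Pi.smul_apply, Pi.single_apply,
    hcos, hsin, Equiv.swap_apply_def]
  split_ifs <;> simp_all [eq_comm]

theorem stmt4_general (n : ℕ) (i j : Fin n) (hij : i ≠ j)
    (c : Equiv.Perm (Fin n) → ℂ)
    (u : ⨂[ℂ] _ : Fin n, (Fin n → ℂ))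
    (hu : u = ∑ σ : Equiv.Perm (Fin n),
      c σ • (PiTensorProduct.tprod ℂ fun k => (Pi.single (σ k) 1 : Fin n → ℂ)))
    (hinv : ∀ θ : ℝ,
      PiTensorProduct.map (fun _ : Fin n => Matrix.toLin' (Rot n i j (θ : ℂ))) u = u) :
    ∀ σ : Equiv.Perm (Fin n), c (Equiv.swap i j * σ) = -c σ := by
  set e : Equiv.Perm (Fin n) → ⨂[ℂ] _ : Fin n, (Fin n → ℂ) :=
    fun τ => tprod ℂ fun k => (Pi.single (τ k) 1 : Fin n → ℂ)
  have hrot : u = ∑ τ, (-c τ) • e (Equiv.swap i j * τ) := by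
    conv_lhs => rw [← hinv (Real.pi / 2), hu]
    simp only [map_sum, map_smul,
      map_tprod_single_of_apply_single (toLin'_Rot_pi_div_two_single hij),
      Equiv.Perm.prod_ite_apply_eq, smul_smul, mul_neg_one, Equiv.Perm.mul_apply, e]
  have hswapped : u = ∑ τ, (-c (Equiv.swap i j * τ)) • e τ := by
    rw [hrot, ← Equiv.sum_comp (Equiv.mulLeft (Equiv.swap i j))]
    simp [← mul_assoc]
  have hli : LinearIndependent ℂ e :=
    linearIndependent_tprod_single.comp _ DFunLike.coe_injective
  intro σ
  have hcoeff := Fintype.linearIndependent_iffₛ.mp hli c _ (hu.symm.trans hswapped) σ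
  linear_combination hcoeff

/-- If `u = Σ_σ c_σ e_{σ(1)} ⊗ ⋯ ⊗ e_{σ(n)}` is invariant under `R_{ij}(θ)^{⊗n}` for all
real `θ`, then the coefficients are antisymmetric under exchanging `i` and `j`. -/
theorem stmt4 (n : ℕ) (hn : 2 ≤ n) (i j : Fin n) (hij : i ≠ j)
    (c : Equiv.Perm (Fin n) → ℂ)
    (u : ⨂[ℂ] _ : Fin n, (Fin n → ℂ))
    (hu : u = ∑ σ : Equiv.Perm (Fin n),
      c σ • (PiTensorProduct.tprod ℂ fun k => (Pi.single (σ k) 1 : Fin n → ℂ)))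
    (hinv : ∀ θ : ℝ,
      PiTensorProduct.map (fun _ : Fin n => Matrix.toLin' (Rot n i j (θ : ℂ))) u = u) :
    ∀ σ : Equiv.Perm (Fin n), c (Equiv.swap i j * σ) = -c σ :=
  stmt4_general n i j hij c u hu hinv
end

section
/- Let n ≥ 1 and let v ∈ (ℂⁿ)^{⊗n}. If T^{⊗n} v = v for every linear map T : ℂⁿ → ℂⁿ with det T = 1 (i.e., for every T ∈ SL(n,ℂ)), then v is a scalar multiple of the antisymmetrization of the standard basis: there exists κ ∈ ℂ such that v = κ · A(e₁,…,eₙ). In other words, up to normalization the Fermi-Dirac state is the unique state invariant under the action of SL(n,ℂ). -/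
/-
Write `c_f` for the coordinates of `v` in the basis `e_{f(1)} ⊗ ⋯ ⊗ e_{f(n)}`. A monomial map
`e_j ↦ d_j e_{ρ(j)}` acts on these coordinates by `c_{ρ ∘ f} ↦ (∏ₖ d_{f(k)}) c_f`. If `f` misses an
index `i`, the diagonal map scaling `e_i` by `2^{-(n-1)}` and every other `e_j` by `2` lies in
`SL(n)` and multiplies `c_f` by `2^n`, so `c_f = 0`. The transposition `(a b)` twisted by the sign
`e_a ↦ -e_b` also lies in `SL(n)`, so `c_{(a b) ∘ σ} = -c_σ` for permutations `σ`; hence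
`c_σ = sgn(σ) c_id` and `v = c_id • A(e₁,…,eₙ)`.
-/

open scoped TensorProduct

/-- The antisymmetrization `A(v₁,…,vₙ) = Σ_{σ ∈ Sₙ} sgn(σ) • v_{σ(1)} ⊗ ⋯ ⊗ v_{σ(n)}`
in the `n`-fold tensor power of `ℂⁿ`. -/
noncomputable def antisym (n : ℕ) (v : Fin n → (Fin n → ℂ)) :
    ⨂[ℂ] _ : Fin n, (Fin n → ℂ) :=
  ∑ σ : Equiv.Perm (Fin n),
    ((Equiv.Perm.sign σ : ℤ) : ℂ) • (PiTensorProduct.tprod ℂ fun k => v (σ k))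

open Module PiTensorProduct Equiv

section Coordinates

variable (R : Type*) [CommRing R] (ι m : Type*) [Fintype ι] [Fintype m] [DecidableEq m]

noncomputable def tensorPowerBasisFun : Basis (ι → m) R (⨂[R] _ : ι, (m → R)) :=
  Basis.piTensorProduct fun _ => Pi.basisFun R m

variable {R ι m}

@[simp]
lemma tensorPowerBasisFun_apply (f : ι → m) :
    tensorPowerBasisFun R ι m f = tprod R fun k => (Pi.single (f k) 1 : m → R) := by
  simp [tensorPowerBasisFun]

noncomputable def monomialEnd (d : m → R) (ρ : Perm m) : (m → R) →ₗ[R] (m → R) :=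
  Matrix.toLin' (ρ⁻¹.permMatrix R * Matrix.diagonal d)

lemma monomialEnd_single (d : m → R) (ρ : Perm m) (j : m) :
    monomialEnd d ρ (Pi.single j 1) = d j • Pi.single (ρ j) 1 := by
  rw [monomialEnd, Matrix.toLin'_apply, ← Matrix.mulVec_mulVec, Matrix.diagonal_mulVec_single,
    Matrix.permMatrix_mulVec, Perm.inv_def, Pi.single_comp_equiv, symm_symm,
    ← smul_eq_mul, Pi.single_smul']

lemma det_monomialEnd (d : m → R) (ρ : Perm m) :
    LinearMap.det (monomialEnd d ρ) = Perm.sign ρ * ∏ j, d j := by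
  simp [monomialEnd, LinearMap.det_toLin']

lemma map_monomialEnd_tensorPowerBasisFun (d : m → R) (ρ : Perm m) (f : ι → m) :
    map (fun _ => monomialEnd d ρ) (tensorPowerBasisFun R ι m f) =
      (∏ k, d (f k)) • tensorPowerBasisFun R ι m (ρ ∘ f) := by
  simp only [tensorPowerBasisFun_apply, map_tprod, monomialEnd_single, MultilinearMap.map_smul_univ,
    Function.comp_apply]

lemma repr_map_monomialEnd (d : m → R) (ρ : Perm m) (v : ⨂[R] _ : ι, (m → R))
    (f : ι → m) :
    (tensorPowerBasisFun R ι m).repr (map (fun _ => monomialEnd d ρ) v) (ρ ∘ f) =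
      (∏ k, d (f k)) * (tensorPowerBasisFun R ι m).repr v f := by
  have key : Finsupp.lapply (ρ ∘ f) ∘ₗ (tensorPowerBasisFun R ι m).repr.toLinearMap ∘ₗ
      map (fun _ => monomialEnd d ρ) =
      (∏ k, d (f k)) • (Finsupp.lapply f ∘ₗ (tensorPowerBasisFun R ι m).repr.toLinearMap) :=
    (tensorPowerBasisFun R ι m).ext fun g => by
      simp only [LinearMap.comp_apply, LinearEquiv.coe_coe, map_monomialEnd_tensorPowerBasisFun,
        map_smul, Basis.repr_self, Finsupp.lapply_apply, LinearMap.smul_apply,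
        smul_eq_mul, Finsupp.single_apply, ρ.injective.comp_left.eq_iff]
      by_cases hg : g = f <;> simp [hg]
  exact LinearMap.congr_fun key v

end Coordinates

section SpecialLinearInvariant

variable {K ι : Type*} [Field K] [Fintype ι] [DecidableEq ι]

def IsSpecialLinearInvariant (v : ⨂[K] _ : ι, (ι → K)) : Prop :=
  ∀ T : (ι → K) →ₗ[K] (ι → K), LinearMap.det T = 1 → map (fun _ => T) v = v

namespace IsSpecialLinearInvariant

variable {v : ⨂[K] _ : ι, (ι → K)}

lemma repr_eq_zero_of_not_surjective [CharZero K] (hv : IsSpecialLinearInvariant v) {f : ι → ι}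
    (hf : ¬ Function.Surjective f) : (tensorPowerBasisFun K ι ι).repr v f = 0 := by
  obtain ⟨i, hi⟩ : ∃ i, ∀ k, f k ≠ i := by simpa [Function.Surjective] using hf
  set N := Fintype.card ι
  let d := Function.update (fun _ => (2 : K)) i (2 ^ (N - 1))⁻¹
  have hdet : LinearMap.det (monomialEnd d 1) = 1 := by
    simp [d, det_monomialEnd, Finset.prod_update_of_mem, Finset.card_univ_sdiff, N]
  have hscale : ∏ k, d (f k) = 2 ^ N := by
    simp [d, Function.update_of_ne (hi _), N]
  have hN : (2 : K) ^ N ≠ 1 := by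
    exact_mod_cast Nat.pow_eq_one.not.mpr (by simp [N, (Fintype.card_pos_iff.mpr ⟨i⟩).ne'])
  have key := repr_map_monomialEnd d 1 v f
  rw [hv _ hdet, hscale, Perm.coe_one, Function.id_comp] at key
  by_contra hne
  exact hN ((mul_eq_right₀ hne).mp key.symm)

lemma repr_swap_mul (hv : IsSpecialLinearInvariant v) {a b : ι} (hab : a ≠ b) (σ : Perm ι) :
    (tensorPowerBasisFun K ι ι).repr v ⇑(swap a b * σ) =
      -(tensorPowerBasisFun K ι ι).repr v σ := by
  let d := Function.update (fun _ => (1 : K)) a (-1)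
  have hdet : LinearMap.det (monomialEnd d (swap a b)) = 1 := by
    simp [d, det_monomialEnd, Finset.prod_update_of_mem, Perm.sign_swap hab]
  have hsign : ∏ k, d (σ k) = -1 := by
    rw [Equiv.prod_comp σ d]
    simp [d, Finset.prod_update_of_mem]
  have key := repr_map_monomialEnd d (swap a b) v σ
  rwa [hv _ hdet, hsign, neg_one_mul] at key

lemma repr_perm (hv : IsSpecialLinearInvariant v) (σ : Perm ι) :
    (tensorPowerBasisFun K ι ι).repr v σ =
      Perm.sign σ * (tensorPowerBasisFun K ι ι).repr v id := by
  induction σ using Perm.swap_induction_on with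
  | one => simp
  | swap_mul σ a b hab ih =>
    rw [hv.repr_swap_mul hab, ih, Perm.sign_mul, Perm.sign_swap hab]
    push_cast
    ring

end IsSpecialLinearInvariant

end SpecialLinearInvariant

lemma antisym_single_eq_sum (n : ℕ) :
    antisym n (fun i => (Pi.single i 1 : Fin n → ℂ)) =
      ∑ σ : Perm (Fin n),
        ((Perm.sign σ : ℤ) : ℂ) • tensorPowerBasisFun ℂ (Fin n) (Fin n) σ := by
  simp [antisym]

theorem stmt6_general (n : ℕ) (v : ⨂[ℂ] _ : Fin n, (Fin n → ℂ))
    (h : ∀ T : (Fin n → ℂ) →ₗ[ℂ] (Fin n → ℂ), LinearMap.det T = 1 →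
      PiTensorProduct.map (fun _ : Fin n => T) v = v) :
    ∃ κ : ℂ, v = κ • antisym n (fun i => (Pi.single i 1 : Fin n → ℂ)) := by
  have hv : IsSpecialLinearInvariant v := h
  set b := tensorPowerBasisFun ℂ (Fin n) (Fin n)
  refine ⟨b.repr v id, ?_⟩
  calc v = ∑ f, b.repr v f • b f := (b.sum_repr v).symm
    _ = ∑ σ : Perm (Fin n), b.repr v σ • b σ := by
      refine (Fintype.sum_of_injective _ DFunLike.coe_injective _ _ (fun f hf => ?_)
        fun _ => rfl).symm
      have hsurj : ¬ Function.Surjective f := fun hs =>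
        hf ⟨Equiv.ofBijective f (Finite.surjective_iff_bijective.mp hs), rfl⟩
      rw [hv.repr_eq_zero_of_not_surjective hsurj, zero_smul]
    _ = _ := by
      rw [antisym_single_eq_sum, Finset.smul_sum]
      refine Finset.sum_congr rfl fun σ _ => ?_
      rw [hv.repr_perm σ, mul_smul, smul_comm]

/-- Uniqueness: any tensor invariant under `T^{⊗n}` for all `T ∈ SL(n,ℂ)` is a scalar
multiple of the antisymmetrization of the standard basis. -/
theorem stmt6 (n : ℕ) (hn : 1 ≤ n) (v : ⨂[ℂ] _ : Fin n, (Fin n → ℂ))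
    (h : ∀ T : (Fin n → ℂ) →ₗ[ℂ] (Fin n → ℂ), LinearMap.det T = 1 →
      PiTensorProduct.map (fun _ : Fin n => T) v = v) :
    ∃ κ : ℂ, v = κ • antisym n (fun i => (Pi.single i 1 : Fin n → ℂ)) :=
  stmt6_general n v h
end

section
/- Let V be a vector space over ℂ, let v₁,…,vₙ ∈ V be linearly independent, and let c : Sₙ → ℂ satisfy c_{id} = 1/n! and c_σ ∈ {1/n!, −1/n!} for every σ ∈ Sₙ. Set v = Σ_{σ ∈ Sₙ} c_σ · v_{σ(1)} ⊗ ⋯ ⊗ v_{σ(n)} ∈ V^{⊗n}. If v is invariant under every even permutation of the tensor factors (i.e., for every τ in the alternating group Aₙ, the linear map on V^{⊗n} that permutes tensor factors according to τ fixes v), then either c_σ = 1/n! for all σ (the Bose-Einstein statistic) or c_σ = sgn(σ)/n! for all σ (the Fermi-Dirac statistic). -/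
/-!
Extending `v` to a basis of `V` shows that the tensors `v_{σ(1)} ⊗ ⋯ ⊗ v_{σ(n)}` are linearly
independent, so invariance under an even `τ` says exactly `c_{στ} = c_σ`: `c` is constant on the
two cosets of `Aₙ`. It equals `c_id = 1/n!` on `Aₙ`, and on the odd coset it is either `1/n!` or
`-1/n!`.
-/

open scoped TensorProduct
open Equiv PiTensorProduct

theorem Module.Basis.sumExtend_inl {K V ι : Type*} [DivisionRing K] [AddCommGroup V] [Module K V]
    {v : ι → V} (hv : LinearIndependent K v) (i : ι) : sumExtend hv (Sum.inl i) = v i := by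
  simp only [sumExtend, Module.Basis.coe_reindex, Module.Basis.coe_extend, Function.comp_apply,
    Equiv.Set.sumDiffSubset]
  rfl

theorem LinearIndependent.tprod_comp {K V ι α : Type*} [Field K] [AddCommGroup V] [Module K V]
    [Finite α] {w : ι → V} (hw : LinearIndependent K w) :
    LinearIndependent K fun f : α → ι => ⨂ₜ[K] k, w (f k) := by
  simpa only [Function.comp_def, Basis.piTensorProduct_apply,
    Module.Basis.sumExtend_inl] using
    ((Basis.piTensorProduct fun _ : α => Module.Basis.sumExtend hw).linearIndependent.comp
      (Sum.inl ∘ ·) Sum.inl_injective.comp_left)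

theorem LinearIndependent.tprod_perm {K V α : Type*} [Field K] [AddCommGroup V] [Module K V]
    [Finite α] {v : α → V} (hv : LinearIndependent K v) :
    LinearIndependent K fun σ : Perm α => ⨂ₜ[K] k, v (σ k) :=
  hv.tprod_comp.comp _ DFunLike.coe_injective

section SumOverPerm

variable {α : Type*} [Fintype α] [DecidableEq α]

theorem reindex_sum_smul_tprod_perm {R M : Type*} [CommSemiring R] [AddCommMonoid M] [Module R M]
    (v : α → M) (c : Perm α → R) (τ : Perm α) :
    reindex R (fun _ : α => M) τ (∑ σ : Perm α, c σ • ⨂ₜ[R] k, v (σ k)) =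
      ∑ σ : Perm α, c (σ * τ) • ⨂ₜ[R] k, v (σ k) := by
  simp only [map_sum, map_smul, reindex_tprod]
  exact (Fintype.sum_equiv (Equiv.mulRight τ) _ _ fun σ => by simp).symm

theorem mul_eq_of_reindex_sum_smul_tprod_perm_eq {K V : Type*} [Field K] [AddCommGroup V]
    [Module K V] {v : α → V} (hv : LinearIndependent K v) {c : Perm α → K} {τ : Perm α}
    (hτ : reindex K (fun _ : α => V) τ (∑ σ : Perm α, c σ • ⨂ₜ[K] k, v (σ k)) =
      ∑ σ : Perm α, c σ • ⨂ₜ[K] k, v (σ k)) (σ : Perm α) : c (σ * τ) = c σ :=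
  Fintype.linearIndependent_iffₛ.1 hv.tprod_perm _ _
    ((reindex_sum_smul_tprod_perm v c τ).symm.trans hτ) σ

theorem Equiv.Perm.eq_or_eq_sign_zsmul_of_mul_alternatingGroup {M : Type*} [AddCommGroup M]
    {c : Perm α → M} (hmul : ∀ σ, ∀ τ ∈ alternatingGroup α, c (σ * τ) = c σ)
    (hc : ∀ σ, c σ = c 1 ∨ c σ = -c 1) :
    (∀ σ, c σ = c 1) ∨ ∀ σ, c σ = (Perm.sign σ : ℤ) • c 1 := by
  have heven : ∀ σ, sign σ = 1 → c σ = c 1 := fun σ hσ => by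
    simpa using hmul 1 σ (mem_alternatingGroup.2 hσ)
  by_cases hall : ∀ σ, c σ = c 1
  · exact .inl hall
  right
  obtain ⟨σ₀, hσ₀⟩ := not_forall.1 hall
  have hodd : sign σ₀ = -1 := (Int.units_eq_one_or _).resolve_left (mt (heven σ₀) hσ₀)
  intro σ
  rcases Int.units_eq_one_or (sign σ) with hσ | hσ
  · simp [heven σ hσ, hσ]
  · have hcoset : σ₀⁻¹ * σ ∈ alternatingGroup α := by
      rw [mem_alternatingGroup, map_mul, map_inv, hodd, hσ]
      decide
    calc c σ = c (σ₀ * (σ₀⁻¹ * σ)) := by rw [mul_inv_cancel_left]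
      _ = (sign σ : ℤ) • c 1 := by
        rw [hmul σ₀ _ hcoset, (hc σ₀).resolve_left hσ₀, hσ]
        simp

end SumOverPerm

/-- If `v = Σ_σ c_σ v_{σ(1)} ⊗ ⋯ ⊗ v_{σ(n)}` with `c_id = 1/n!`, each `c_σ = ±1/n!`,
the `vᵢ` linearly independent, and `v` invariant under every even permutation of the
tensor factors, then `v` is either the Bose-Einstein state (`c_σ = 1/n!` for all `σ`)
or the Fermi-Dirac state (`c_σ = sgn(σ)/n!` for all `σ`). -/
theorem stmt8 (V : Type*) [AddCommGroup V] [Module ℂ V] (n : ℕ)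
    (v : Fin n → V) (hv : LinearIndependent ℂ v)
    (c : Equiv.Perm (Fin n) → ℂ)
    (hcid : c 1 = 1 / (n.factorial : ℂ))
    (hc : ∀ σ : Equiv.Perm (Fin n),
      c σ = 1 / (n.factorial : ℂ) ∨ c σ = -(1 / (n.factorial : ℂ)))
    (hinv : ∀ τ : Equiv.Perm (Fin n), τ ∈ alternatingGroup (Fin n) →
      PiTensorProduct.reindex ℂ (fun _ : Fin n => V) τ
          (∑ σ : Equiv.Perm (Fin n),
            c σ • (PiTensorProduct.tprod ℂ fun k => v (σ k))) =
        ∑ σ : Equiv.Perm (Fin n),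
          c σ • (PiTensorProduct.tprod ℂ fun k => v (σ k))) :
    (∀ σ : Equiv.Perm (Fin n), c σ = 1 / (n.factorial : ℂ)) ∨
    (∀ σ : Equiv.Perm (Fin n),
      c σ = ((Equiv.Perm.sign σ : ℤ) : ℂ) / (n.factorial : ℂ)) := by
  have hmul : ∀ σ, ∀ τ ∈ alternatingGroup (Fin n), c (σ * τ) = c σ := fun σ τ hτ =>
    mul_eq_of_reindex_sum_smul_tprod_perm_eq hv (hinv τ hτ) σ
  rw [← hcid] at hc ⊢
  refine (Perm.eq_or_eq_sign_zsmul_of_mul_alternatingGroup hmul hc).imp_right fun h σ => ?_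
  rw [h σ, hcid, zsmul_eq_mul, mul_one_div]
end

section
/- Let S be a 2×2 complex matrix with det S = 1 and set T = (Sᴴ)⁻¹. For x, y ∈ ℝ⁴ define the transformed fields X' = S·X(x)·Sᴴ, X*' = T·X*(x)·Tᴴ, Y' = S·X(y)·Sᴴ, Y*' = T·X*(y)·Tᴴ. Then the Pauli inner product is invariant under this SL(2,ℂ) action: (1/4)·(X'·Y*' + Y*'·X' + Y'·X*' + X*'·Y') = (1/4)·(X(x)·X*(y) + X*(y)·X(x) + X(y)·X*(x) + X*(x)·X(y)) = (x₀y₀ − x₁y₁ − x₂y₂ − x₃y₃)·I. -/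
open scoped Matrix

/-- The Majorana field `X(x)` of a 4-vector `x ∈ ℝ⁴`. -/
noncomputable def Xmat (x : Fin 4 → ℝ) : Matrix (Fin 2) (Fin 2) ℂ :=
  !![(x 0 : ℂ) - x 1, (x 2 : ℂ) + x 3 * Complex.I;
     (x 2 : ℂ) - x 3 * Complex.I, (x 0 : ℂ) + x 1]

/-- The conjugate field `X*(x)` of a 4-vector `x ∈ ℝ⁴`. -/
noncomputable def Xstar (x : Fin 4 → ℝ) : Matrix (Fin 2) (Fin 2) ℂ :=
  !![(x 0 : ℂ) + x 1, -(x 2 : ℂ) - x 3 * Complex.I;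
     -(x 2 : ℂ) + x 3 * Complex.I, (x 0 : ℂ) - x 1]

/-!
Since `X*(x)` is the adjugate of `X(x)`, both `X(x) X*(x)` and `X*(x) X(x)` equal
`det X(x) • I`, and `det X(x)` is the Minkowski norm of `x`; the anticommutator-like sums in
the theorem are the polarizations of these identities. Under `X ↦ S X Sᴴ`, `X* ↦ T X* Tᴴ`
the inner factors `Sᴴ T` and `Tᴴ S` cancel, so `X' Y*'` is `X Y*` conjugated by `S` and
`Y*' X'` is `Y* X` conjugated by `T`; conjugation fixes scalar matrices.
-/

noncomputable def minkowskiInner (x y : Fin 4 → ℝ) : ℂ :=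
  (x 0 : ℂ) * y 0 - (x 1 : ℂ) * y 1 - (x 2 : ℂ) * y 2 - (x 3 : ℂ) * y 3

theorem Xmat_mul_Xstar_add_Xmat_mul_Xstar (x y : Fin 4 → ℝ) :
    Xmat x * Xstar y + Xmat y * Xstar x = (2 * minkowskiInner x y) • 1 := by
  ext i j
  fin_cases i <;> fin_cases j <;>
    simp [Xmat, Xstar, minkowskiInner] <;> ring_nf <;> simp only [Complex.I_sq] <;> ring

theorem Xstar_mul_Xmat_add_Xstar_mul_Xmat (x y : Fin 4 → ℝ) :
    Xstar y * Xmat x + Xstar x * Xmat y = (2 * minkowskiInner x y) • 1 := by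
  ext i j
  fin_cases i <;> fin_cases j <;>
    simp [Xmat, Xstar, minkowskiInner] <;> ring_nf <;> simp only [Complex.I_sq] <;> ring

theorem sandwich_mul_sandwich {M : Type*} [Monoid M] {L P Q N : M} (hPQ : P * Q = 1)
    (a b : M) : L * a * P * (Q * b * N) = L * (a * b) * N := by
  simp only [mul_assoc]
  rw [← mul_assoc P, hPQ, one_mul]

theorem sandwich_mul_sandwich_add_eq_smul_one {R A : Type*} [CommSemiring R] [Semiring A]
    [Algebra R A] {L P Q N a b c d : A} {r : R}
    (hPQ : P * Q = 1) (hLN : L * N = 1) (h : a * b + c * d = r • 1) :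
    L * a * P * (Q * b * N) + L * c * P * (Q * d * N) = r • 1 := by
  rw [sandwich_mul_sandwich hPQ, sandwich_mul_sandwich hPQ, ← add_mul, ← mul_add, h,
    mul_smul_comm, mul_one, smul_mul_assoc, hLN]

/-- The Pauli inner product is invariant under the `SL(2,ℂ)` action `X ↦ S X Sᴴ`,
`X* ↦ T X* Tᴴ` with `T = (Sᴴ)⁻¹`, and equals the Minkowski inner product times `I`. -/
theorem stmt13 (S : Matrix (Fin 2) (Fin 2) ℂ) (hS : S.det = 1)
    (T : Matrix (Fin 2) (Fin 2) ℂ) (hT : T = (Sᴴ)⁻¹) (x y : Fin 4 → ℝ)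
    (X' : Matrix (Fin 2) (Fin 2) ℂ) (hX' : X' = S * Xmat x * Sᴴ)
    (Xs' : Matrix (Fin 2) (Fin 2) ℂ) (hXs' : Xs' = T * Xstar x * Tᴴ)
    (Y' : Matrix (Fin 2) (Fin 2) ℂ) (hY' : Y' = S * Xmat y * Sᴴ)
    (Ys' : Matrix (Fin 2) (Fin 2) ℂ) (hYs' : Ys' = T * Xstar y * Tᴴ) :
    (1 / 4 : ℂ) • (X' * Ys' + Ys' * X' + Y' * Xs' + Xs' * Y') =
      (1 / 4 : ℂ) • (Xmat x * Xstar y + Xstar y * Xmat x + Xmat y * Xstar x + Xstar x * Xmat y) ∧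
    (1 / 4 : ℂ) • (Xmat x * Xstar y + Xstar y * Xmat x + Xmat y * Xstar x + Xstar x * Xmat y) =
      ((x 0 : ℂ) * y 0 - (x 1 : ℂ) * y 1 - (x 2 : ℂ) * y 2 - (x 3 : ℂ) * y 3) •
        (1 : Matrix (Fin 2) (Fin 2) ℂ) := by
  have hSH_T : Sᴴ * T = 1 := by
    rw [hT]
    exact Matrix.mul_nonsing_inv _ (by simp [Matrix.det_conjTranspose, hS])
  have hT_SH : T * Sᴴ = 1 := mul_eq_one_comm.mp hSH_T
  have hTH_S : Tᴴ * S = 1 := by simpa using congrArg Matrix.conjTranspose hSH_T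
  have hS_TH : S * Tᴴ = 1 := by simpa using congrArg Matrix.conjTranspose hT_SH
  have hXY := Xmat_mul_Xstar_add_Xmat_mul_Xstar x y
  have hYX := Xstar_mul_Xmat_add_Xstar_mul_Xmat x y
  have hXY' : X' * Ys' + Y' * Xs' = (2 * minkowskiInner x y) • 1 := by
    subst hX' hY' hXs' hYs'
    exact sandwich_mul_sandwich_add_eq_smul_one hSH_T hS_TH hXY
  have hYX' : Ys' * X' + Xs' * Y' = (2 * minkowskiInner x y) • 1 := by
    subst hX' hY' hXs' hYs'
    exact sandwich_mul_sandwich_add_eq_smul_one hTH_S hT_SH hYX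
  constructor
  · rw [add_right_comm (X' * Ys'), add_assoc, hXY', hYX', add_right_comm (Xmat x * Xstar y),
      add_assoc, hXY, hYX]
  · rw [add_right_comm (Xmat x * Xstar y), add_assoc, hXY, hYX, minkowskiInner]
    module
end
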